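/- arXiv:2012.12859 — 5 statements merged into one kernel-verified Lean document; each statement's English description precedes it below -/
import Mathlib

section
/- Let (X,d) be a metric space and 1 ≤ p < ∞. If (μ_n) is a sequence in P_p(X) converging to μ ∈ P_p(X) in τ_w^p and (x_n) is a sequence in X converging to x ∈ X, then f_p(μ_n, x_n) → f_p(μ, x) as n → ∞. In other words, the function f_p : P_p(X) × X → [0,∞) is jointly sequentially continuous. -/
open MeasureTheory Filter Topology ProbabilityTheory

/-- `f_p(μ,x) := ∫ d(x,y)^p dμ(y)`. -/
noncomputable def fp {X : Type*} [MetricSpace X] [MeasurableSpace X]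
    (p : ℝ) (μ : Measure X) (x : X) : ℝ :=
  ∫ y, dist x y ^ p ∂μ

/-- Membership in `P_p(X)`. -/
def MemPp {X : Type*} [MetricSpace X] [MeasurableSpace X] (p : ℝ) (μ : Measure X) : Prop :=
  ∀ x : X, Integrable (fun y => dist x y ^ p) μ

/-- Weak convergence of a sequence of Borel measures. -/
def WeakConv {X : Type*} [MetricSpace X] [MeasurableSpace X]
    (μs : ℕ → Measure X) (μ : Measure X) : Prop :=
  ∀ g : BoundedContinuousFunction X ℝ,
    Tendsto (fun n => ∫ y, g y ∂(μs n)) atTop (𝓝 (∫ y, g y ∂μ))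

/-- Convergence in `τ_w^p`. -/
def TauWp {X : Type*} [MetricSpace X] [MeasurableSpace X]
    (p : ℝ) (μs : ℕ → Measure X) (μ : Measure X) : Prop :=
  WeakConv μs μ ∧ ∀ x : X, Tendsto (fun n => fp p (μs n) x) atTop (𝓝 (fp p μ x))

/-- Joint Fréchet p-mean `F_p(μ,C)`. -/
def Fp {X : Type*} [MetricSpace X] [MeasurableSpace X]
    (p : ℝ) (μ : Measure X) (C : Set X) : Set X :=
  {x ∈ C | ∀ x' ∈ C, fp p μ x ≤ fp p μ x'}

/-- Support of a measure. -/
def msupport {X : Type*} [MetricSpace X] [MeasurableSpace X] (μ : Measure X) : Set X :=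
  {x : X | ∀ U : Set X, IsOpen U → x ∈ U → 0 < μ U}

/-- Kuratowski upper limit. -/
def KurLs {X : Type*} [MetricSpace X] (C : ℕ → Set X) : Set X :=
  ⋂ n, closure (⋃ m, ⋃ (_ : n ≤ m), C m)

/-- Kuratowski lower limit. -/
def KurLi {X : Type*} [MetricSpace X] (C : ℕ → Set X) : Set X :=
  {x : X | ∀ ε : ℝ, 0 < ε → ∀ᶠ n in atTop, ∃ y ∈ C n, dist x y < ε}

/-- One-sided Hausdorff distance `ρ(C,C') = max_{x ∈ C} min_{x' ∈ C'} d(x,x')`. -/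
noncomputable def rho {X : Type*} [MetricSpace X] (C C' : Set X) : ℝ :=
  ⨆ x ∈ C, Metric.infDist x C'

/-- Empirical measure of the first `n` samples. -/
noncomputable def empMeasure {X Ω : Type*} [MeasurableSpace X]
    (Y : ℕ → Ω → X) (n : ℕ) (ω : Ω) : Measure X :=
  (n : ENNReal)⁻¹ • ∑ i ∈ Finset.range n, Measure.dirac (Y i ω)

/-- Effros σ-algebra on subsets of `X`. -/
def effros (X : Type*) [TopologicalSpace X] : MeasurableSpace (Set X) :=
  MeasurableSpace.generateFrom
    {S : Set (Set X) | ∃ U : Set X, IsOpen U ∧ S = {C : Set X | (C ∩ U).Nonempty}}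

/-- The relation `x ⇝_μ x'`. -/
def LeadsTo {X : Type*} [MetricSpace X] [MeasurableSpace X] (μ : Measure X) (x x' : X) : Prop :=
  ∃ ε₀ > (0 : ℝ), ∀ ε : ℝ, 0 < ε → ε ≤ ε₀ →
    ∃ φ : X → X, Set.MapsTo φ (Metric.ball x ε) (Metric.ball x' ε) ∧
      Measurable ((Metric.ball x ε).restrict φ) ∧
      ∀ z ∈ Metric.ball x ε, ∀ᵐ y ∂μ, dist (φ z) y = dist z y

/-- The equivalence relation `x ∼_μ x'`. -/
def SimEq {X : Type*} [MetricSpace X] [MeasurableSpace X] (μ : Measure X) (x x' : X) : Prop :=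
  LeadsTo μ x x' ∧ LeadsTo μ x' x

/-- The equivalence class `[x]_μ`. -/
def eqClass {X : Type*} [MetricSpace X] [MeasurableSpace X] (μ : Measure X) (x : X) : Set X :=
  {x' : X | SimEq μ x x'}

/-! `f_p(ν, x)^{1/p}` is the `L^p(ν)`-norm of `d(x, ·)`, so for a probability measure `ν`
Minkowski's inequality makes `x ↦ f_p(ν, x)^{1/p}` 1-Lipschitz. The maps `f_p(μ_n, ·)^{1/p}` are
therefore equi-Lipschitz, and their convergence at `x` carries over to any sequence `x_n → x`. -/

theorem tendsto_apply_of_lipschitzWith {ι α β : Type*} [PseudoMetricSpace α]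
    [PseudoMetricSpace β] {l : Filter ι} {K : NNReal} {f : ι → α → β} {x : ι → α} {x₀ : α}
    {b : β} (hf : ∀ i, LipschitzWith K (f i)) (hfx₀ : Tendsto (fun i => f i x₀) l (𝓝 b))
    (hx : Tendsto x l (𝓝 x₀)) :
    Tendsto (fun i => f i (x i)) l (𝓝 b) := by
  rw [tendsto_iff_dist_tendsto_zero] at hfx₀ hx ⊢
  have hbound : Tendsto (fun i => K * dist (x i) x₀ + dist (f i x₀) b) l (𝓝 0) := by
    simpa using (hx.const_mul (K : ℝ)).add hfx₀
  refine squeeze_zero (fun _ => dist_nonneg) (fun i => ?_) hbound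
  calc dist (f i (x i)) b ≤ dist (f i (x i)) (f i x₀) + dist (f i x₀) b := dist_triangle _ _ _
    _ ≤ K * dist (x i) x₀ + dist (f i x₀) b := by gcongr; exact (hf i).dist_le_mul _ _

section Fp

variable {X : Type*} [MetricSpace X] [MeasurableSpace X] {p : ℝ} {ν : Measure X}

theorem fp_nonneg (x : X) : 0 ≤ fp p ν x :=
  integral_nonneg fun _ => Real.rpow_nonneg dist_nonneg p

theorem eLpNorm_dist_le_add {q : ENNReal} (hq : 1 ≤ q) [IsProbabilityMeasure ν] {x' : X}
    (hm : AEStronglyMeasurable (dist x' ·) ν) (x : X) :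
    eLpNorm (dist x ·) q ν ≤ eLpNorm (dist x' ·) q ν + ENNReal.ofReal (dist x x') := by
  have hq0 : q ≠ 0 := (zero_lt_one.trans_le hq).ne'
  calc eLpNorm (dist x ·) q ν ≤ eLpNorm ((dist x' ·) + fun _ => dist x x') q ν := by
        refine eLpNorm_mono fun y => ?_
        simp only [Pi.add_apply, Real.norm_of_nonneg dist_nonneg,
          Real.norm_of_nonneg (add_nonneg dist_nonneg dist_nonneg)]
        linarith [dist_triangle x x' y]
    _ ≤ eLpNorm (dist x' ·) q ν + eLpNorm (fun _ => dist x x') q ν :=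
        eLpNorm_add_le hm aestronglyMeasurable_const hq
    _ = eLpNorm (dist x' ·) q ν + ENNReal.ofReal (dist x x') := by
        rw [eLpNorm_const _ hq0 (IsProbabilityMeasure.ne_zero ν), measure_univ,
          ENNReal.one_rpow, mul_one, Real.enorm_eq_ofReal dist_nonneg]

theorem MemPp.aestronglyMeasurable_dist (hp : 0 < p) (hν : MemPp p ν) (x : X) :
    AEStronglyMeasurable (dist x ·) ν := by
  have := (Real.continuous_rpow_const (inv_nonneg.2 hp.le)).comp_aestronglyMeasurable
    (hν x).aestronglyMeasurable
  simpa only [Real.rpow_rpow_inv dist_nonneg hp.ne'] using this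

theorem MemPp.memLp_dist (hp : 0 < p) (hν : MemPp p ν) (x : X) :
    MemLp (dist x ·) (ENNReal.ofReal p) ν := by
  refine (integrable_norm_rpow_iff (hν.aestronglyMeasurable_dist hp x)
    (ENNReal.ofReal_pos.2 hp).ne' ENNReal.ofReal_ne_top).1 ?_
  simpa only [Real.norm_of_nonneg dist_nonneg, ENNReal.toReal_ofReal hp.le] using hν x

theorem fp_rpow_inv_eq_toReal_eLpNorm (hp : 0 < p) {x : X}
    (hint : Integrable (fun y => dist x y ^ p) ν) :
    fp p ν x ^ p⁻¹ = (eLpNorm (dist x ·) (ENNReal.ofReal p) ν).toReal := by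
  have henorm : ∀ y, ENNReal.ofReal (dist x y ^ p) = ‖dist x y‖ₑ ^ p := fun y => by
    rw [← ENNReal.ofReal_rpow_of_nonneg dist_nonneg hp.le, Real.enorm_eq_ofReal dist_nonneg]
  rw [fp, integral_eq_lintegral_of_nonneg_ae (.of_forall fun _ => Real.rpow_nonneg dist_nonneg p)
      hint.aestronglyMeasurable,
    eLpNorm_eq_lintegral_rpow_enorm_toReal (ENNReal.ofReal_pos.2 hp).ne' ENNReal.ofReal_ne_top,
    ENNReal.toReal_ofReal hp.le, ENNReal.toReal_rpow, one_div]
  simp only [henorm]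

theorem MemPp.lipschitzWith_fp_rpow_inv (hp : 1 ≤ p) [IsProbabilityMeasure ν] (hν : MemPp p ν) :
    LipschitzWith 1 (fun x => fp p ν x ^ p⁻¹) := by
  have hp0 : 0 < p := zero_lt_one.trans_le hp
  refine LipschitzWith.of_le_add fun x x' => ?_
  rw [fp_rpow_inv_eq_toReal_eLpNorm hp0 (hν x), fp_rpow_inv_eq_toReal_eLpNorm hp0 (hν x'),
    ← ENNReal.toReal_ofReal dist_nonneg,
    ← ENNReal.toReal_add (hν.memLp_dist hp0 x').eLpNorm_ne_top ENNReal.ofReal_ne_top]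
  exact ENNReal.toReal_mono
    (ENNReal.add_ne_top.2 ⟨(hν.memLp_dist hp0 x').eLpNorm_ne_top, ENNReal.ofReal_ne_top⟩)
    (eLpNorm_dist_le_add (ENNReal.one_le_ofReal.2 hp) (hν.aestronglyMeasurable_dist hp0 x') x)

end Fp

theorem frechet_stmt2_general {X : Type*} [MetricSpace X] [MeasurableSpace X]
    (p : ℝ) (hp : 1 ≤ p)
    (μs : ℕ → Measure X) (μ : Measure X)
    (hμsprob : ∀ n, IsProbabilityMeasure (μs n))
    (hμsPp : ∀ n, MemPp p (μs n))
    (hconv : TauWp p μs μ)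
    (x : ℕ → X) (x₀ : X) (hx : Tendsto x atTop (𝓝 x₀)) :
    Tendsto (fun n => fp p (μs n) (x n)) atTop (𝓝 (fp p μ x₀)) := by
  have hp0 : 0 < p := zero_lt_one.trans_le hp
  have hlip : ∀ n, LipschitzWith 1 (fun z => fp p (μs n) z ^ p⁻¹) := fun n =>
    have := hμsprob n
    (hμsPp n).lipschitzWith_fp_rpow_inv hp
  have hroot : Tendsto (fun n => fp p (μs n) x₀ ^ p⁻¹) atTop (𝓝 (fp p μ x₀ ^ p⁻¹)) :=
    ((Real.continuous_rpow_const (inv_nonneg.2 hp0.le)).tendsto _).comp (hconv.2 x₀)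
  have hpow := ((Real.continuous_rpow_const hp0.le).tendsto _).comp
    (tendsto_apply_of_lipschitzWith hlip hroot hx)
  simpa only [Function.comp_def, Real.rpow_inv_rpow (fp_nonneg _) hp0.ne'] using hpow

theorem frechet_stmt2 {X : Type*} [MetricSpace X] [MeasurableSpace X] [BorelSpace X]
    (p : ℝ) (hp : 1 ≤ p)
    (μs : ℕ → Measure X) (μ : Measure X)
    (hμsprob : ∀ n, IsProbabilityMeasure (μs n)) (hμprob : IsProbabilityMeasure μ)
    (hμsPp : ∀ n, MemPp p (μs n)) (hμPp : MemPp p μ)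
    (hconv : TauWp p μs μ)
    (x : ℕ → X) (x₀ : X) (hx : Tendsto x atTop (𝓝 x₀)) :
    Tendsto (fun n => fp p (μs n) (x n)) atTop (𝓝 (fp p μ x₀)) :=
  frechet_stmt2_general p hp μs μ hμsprob hμsPp hconv x x₀ hx
end

section
/- Let (X,d) be a metric space with the Heine–Borel property and 1 ≤ p < ∞. Then for every μ ∈ P_p(X) and every nonempty closed C ⊆ X, the joint Fréchet p-mean F_p(μ, C) is nonempty and compact. -/
/-! `f_p(μ, ·)` is continuous by dominated convergence, and it is coercive: a ball `B(x₀, R)`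
of positive mass contributes at least `(d(x, x₀) - R)^p μ(B(x₀, R))` to `f_p(μ, x)`. Heine–Borel
makes `X` proper, and on a proper space a continuous coercive function attains its infimum over
a nonempty closed set `C`; its set of minimisers is closed and lies in a bounded sublevel set. -/

open MeasureTheory Filter Topology ProbabilityTheory

open Bornology Metric

lemma one_add_rpow_le_two_rpow_mul {p t : ℝ} (hp : 0 ≤ p) (ht : 0 ≤ t) :
    (1 + t) ^ p ≤ 2 ^ p * (1 + t ^ p) := by
  have hmax : 1 + t ≤ 2 * max 1 t := by
    rcases le_total t 1 with h | h <;> simp [h] <;> linarith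
  calc (1 + t) ^ p ≤ (2 * max 1 t) ^ p := Real.rpow_le_rpow (by positivity) hmax hp
    _ = 2 ^ p * max 1 t ^ p := Real.mul_rpow zero_le_two (by positivity)
    _ ≤ 2 ^ p * (1 + t ^ p) := by
        gcongr
        rcases le_total t 1 with h | h
        · simp [h, Real.rpow_nonneg ht p]
        · simp [h]

section

variable {X : Type*} [MetricSpace X] [MeasurableSpace X] [OpensMeasurableSpace X]
  {p : ℝ} {μ : Measure X}

theorem continuous_fp [IsFiniteMeasure μ] (hp : 0 ≤ p) (hμ : MemPp p μ) :
    Continuous (fp p μ) := by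
  have hcont : ∀ y : X, Continuous fun x : X => dist x y ^ p := fun y =>
    (continuous_id.dist continuous_const).rpow_const fun _ => Or.inr hp
  refine continuous_iff_continuousAt.2 fun x => ?_
  refine continuousAt_of_dominated (bound := fun y => 2 ^ p * (1 + dist x y ^ p))
    (Eventually.of_forall fun _ =>
      ((continuous_const.dist continuous_id).rpow_const fun _ => Or.inr hp).aestronglyMeasurable)
    ?_ (((integrable_const 1).add (hμ x)).const_mul _)
    (Eventually.of_forall fun y => (hcont y).continuousAt)
  filter_upwards [ball_mem_nhds x one_pos] with x' hx'
  refine Eventually.of_forall fun y => ?_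
  have hdist : dist x' y ≤ 1 + dist x y := by
    linarith [dist_triangle x' x y, mem_ball.1 hx']
  rw [Real.norm_of_nonneg (by positivity)]
  exact (Real.rpow_le_rpow dist_nonneg hdist hp).trans
    (one_add_rpow_le_two_rpow_mul hp dist_nonneg)

theorem rpow_mul_measureReal_closedBall_le_fp [IsFiniteMeasure μ] (hp : 0 ≤ p)
    {x x₀ : X} {R : ℝ} (hR : R ≤ dist x x₀) (hx : Integrable (fun y => dist x y ^ p) μ) :
    (dist x x₀ - R) ^ p * μ.real (closedBall x₀ R) ≤ fp p μ x := by
  have hle : (closedBall x₀ R).indicator (fun _ => (dist x x₀ - R) ^ p) ≤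
      fun y => dist x y ^ p := by
    intro y
    by_cases hy : y ∈ closedBall x₀ R
    · rw [Set.indicator_of_mem hy]
      refine Real.rpow_le_rpow (by linarith) ?_ hp
      linarith [dist_triangle x y x₀, mem_closedBall.1 hy]
    · rw [Set.indicator_of_notMem hy]
      positivity
  have := integral_mono ((integrable_const _).indicator measurableSet_closedBall) hx hle
  rwa [integral_indicator_const _ measurableSet_closedBall, smul_eq_mul, mul_comm] at this

theorem tendsto_fp_cobounded_atTop [IsFiniteMeasure μ] [NeZero μ] (hp : 0 < p)
    (hμ : MemPp p μ) : Tendsto (fp p μ) (cobounded X) atTop := by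
  obtain ⟨x₀⟩ := Measure.nonempty_of_neZero μ
  obtain ⟨R, hR⟩ : ∃ n : ℕ, μ (closedBall x₀ n) ≠ 0 := by
    by_contra! h
    refine NeZero.ne μ (Measure.measure_univ_eq_zero.1 ?_)
    rw [← iUnion_closedBall_nat x₀]
    exact measure_iUnion_null h
  have hc : 0 < μ.real (closedBall x₀ R) := ENNReal.toReal_pos hR (measure_ne_top μ _)
  have hlower : Tendsto (fun x => (dist x x₀ - R) ^ p * μ.real (closedBall x₀ R))
      (cobounded X) atTop :=
    ((tendsto_rpow_atTop hp).comp (tendsto_atTop_add_const_right _ _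
      (tendsto_dist_right_cobounded_atTop x₀))).atTop_mul_const hc
  refine tendsto_atTop_mono' _ ?_ hlower
  filter_upwards [(tendsto_dist_right_cobounded_atTop x₀).eventually_ge_atTop (R : ℝ)] with x hx
  exact rpow_mul_measureReal_closedBall_le_fp hp.le hx (hμ x)

end

theorem argmin_nonempty_and_isCompact {X : Type*} [PseudoMetricSpace X] [ProperSpace X]
    {f : X → ℝ} (hf : Continuous f) (hcoer : Tendsto f (cobounded X) atTop) {C : Set X}
    (hC : IsClosed C) (hCne : C.Nonempty) :
    {x ∈ C | ∀ x' ∈ C, f x ≤ f x'}.Nonempty ∧ IsCompact {x ∈ C | ∀ x' ∈ C, f x ≤ f x'} := by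
  obtain ⟨x₀, hx₀⟩ := hCne
  have hfar : ∀ᶠ x in cobounded X, f x₀ ≤ f x := hcoer.eventually_ge_atTop _
  obtain ⟨z, hzC, hz⟩ := hf.continuousOn.exists_isMinOn' hC hx₀
    (by rw [← cobounded_eq_cocompact]; exact hfar.filter_mono inf_le_left)
  have hclosed : IsClosed {x | ∀ x' ∈ C, f x ≤ f x'} := by
    simp only [Set.ofPred_forall]
    exact isClosed_biInter fun x' _ => isClosed_le hf continuous_const
  have hbdd : IsBounded {x | f x ≤ f x₀} :=
    isBounded_def.2 <| (hcoer.eventually_gt_atTop (f x₀)).mono fun _ hx => not_le.2 hx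
  exact ⟨⟨z, hzC, fun x' hx' => hz hx'⟩, isCompact_of_isClosed_isBounded (hC.inter hclosed)
    (hbdd.subset fun x hx => hx.2 x₀ hx₀)⟩

theorem frechet_stmt4 {X : Type*} [MetricSpace X] [MeasurableSpace X] [BorelSpace X]
    (hHB : ∀ s : Set X, IsClosed s → Bornology.IsBounded s → IsCompact s)
    (p : ℝ) (hp : 1 ≤ p)
    (μ : Measure X) (hμprob : IsProbabilityMeasure μ) (hμPp : MemPp p μ)
    (C : Set X) (hC : IsClosed C) (hCne : C.Nonempty) :
    (Fp p μ C).Nonempty ∧ IsCompact (Fp p μ C) := by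
  have : ProperSpace X := ⟨fun x r => hHB _ isClosed_closedBall isBounded_closedBall⟩
  have hp₀ : 0 < p := zero_lt_one.trans_le hp
  exact argmin_nonempty_and_isCompact (continuous_fp hp₀.le hμPp)
    (tendsto_fp_cobounded_atTop hp₀ hμPp) hC hCne
end

section
/- Let (X,d) be a separable, locally compact metric space, let (Ω, F, P) be a probability space, and let C_n : Ω → C(X), n ∈ ℕ, be maps into the closed subsets of X, each measurable with respect to the Effros σ-algebra E(X). Then the map ω ↦ Ls_n C_n(ω) is also F/E(X)-measurable; that is, for every open U ⊆ X, the set {ω ∈ Ω : (Ls_n C_n(ω)) ∩ U ≠ ∅} belongs to F. -/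
open MeasureTheory Filter Topology ProbabilityTheory

/-!
The upper limit `Ls_n C_n` meets an open `U` iff some open `V` with compact closure inside `U`,
taken from a fixed countable family covering `U`, is hit by infinitely many `C_n`. One direction
is the definition of `Ls`; for the other, the sets `closure (⋃ m ≥ n, C_m) ∩ closure V` are nested,
nonempty and compact, so their intersection is a point of `Ls_n C_n ∩ U`. The hitting event of `U`
is therefore a countable union of `limsup`s of hitting events of the `C_n`.
-/

open Set Filter Topology TopologicalSpace

theorem measurable_effros_iff {X Ω : Type*} [TopologicalSpace X] [MeasurableSpace Ω]
    {f : Ω → Set X} :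
    Measurable[_, effros X] f ↔ ∀ U, IsOpen U → MeasurableSet {ω | (f ω ∩ U).Nonempty} := by
  refine ⟨fun hf U hU => hf (MeasurableSpace.measurableSet_generateFrom ⟨U, hU, rfl⟩),
    fun h => measurable_generateFrom ?_⟩
  rintro _ ⟨U, hU, rfl⟩
  exact h U hU

theorem measurableSet_setOf_frequently {Ω : Type*} [MeasurableSpace Ω] {p : ℕ → Ω → Prop}
    (hp : ∀ n, MeasurableSet {ω | p n ω}) : MeasurableSet {ω | ∃ᶠ n in atTop, p n ω} := by
  convert MeasurableSet.measurableSet_limsup hp using 1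
  ext ω
  exact mem_limsup_iff_frequently_mem.symm

theorem exists_countable_cover_isCompact_closure {X : Type*} [TopologicalSpace X]
    [SecondCountableTopology X] [LocallyCompactSpace X] [RegularSpace X] {U : Set X}
    (hU : IsOpen U) : ∃ T : Set (Set X), T.Countable ∧
      (∀ V ∈ T, IsOpen V ∧ IsCompact (closure V) ∧ closure V ⊆ U) ∧ ⋃₀ T = U := by
  set S := {V : Set X | IsOpen V ∧ IsCompact (closure V) ∧ closure V ⊆ U}
  have hSU : ⋃₀ S = U := by
    refine (sUnion_subset fun V hV => subset_closure.trans hV.2.2).antisymm fun x hx => ?_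
    obtain ⟨V, hVo, hxV, hVU, hVc⟩ :=
      exists_open_between_and_isCompact_closure isCompact_singleton hU (singleton_subset_iff.2 hx)
    exact ⟨V, ⟨hVo, hVc, hVU⟩, hxV rfl⟩
  obtain ⟨T, hTc, hTS, hTU⟩ := isOpen_sUnion_countable S fun V hV => hV.1
  exact ⟨T, hTc, fun V hV => hTS hV, hTU.trans hSU⟩

section KuratowskiUpperLimit

variable {X : Type*} [MetricSpace X] {C : ℕ → Set X}

theorem mem_kurLs_iff {x : X} :
    x ∈ KurLs C ↔ ∀ V ∈ 𝓝 x, ∃ᶠ m in atTop, (C m ∩ V).Nonempty := by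
  simp only [KurLs, mem_iInter, mem_closure_iff_nhds, frequently_atTop, inter_nonempty,
    mem_iUnion, exists_prop]
  exact ⟨fun h V hV n => let ⟨y, hyV, m, hm, hyC⟩ := h n V hV; ⟨m, hm, y, hyC, hyV⟩,
    fun h n V hV => let ⟨m, hm, y, hyC, hyV⟩ := h V hV n; ⟨y, hyV, m, hm, hyC⟩⟩

theorem kurLs_inter_closure_nonempty_of_frequently {V : Set X} (hV : IsCompact (closure V))
    (h : ∃ᶠ m in atTop, (C m ∩ V).Nonempty) : (KurLs C ∩ closure V).Nonempty := by
  set F : ℕ → Set X := fun n => closure (⋃ m, ⋃ (_ : n ≤ m), C m) ∩ closure V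
  have hF_anti : ∀ n, F (n + 1) ⊆ F n := fun n =>
    inter_subset_inter_left _ <| closure_mono <|
      iUnion₂_mono' fun m hm => ⟨m, n.le_succ.trans hm, Subset.rfl⟩
  have hF_nonempty : ∀ n, (F n).Nonempty := fun n => by
    obtain ⟨m, hm, x, hxC, hxV⟩ := frequently_atTop.1 h n
    exact ⟨x, subset_closure (mem_iUnion₂.2 ⟨m, hm, hxC⟩), subset_closure hxV⟩
  have hF_closed : ∀ n, IsClosed (F n) := fun n => isClosed_closure.inter isClosed_closure
  have hF_compact : IsCompact (F 0) := hV.of_isClosed_subset (hF_closed 0) inter_subset_right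
  rw [KurLs, iInter_inter]
  exact IsCompact.nonempty_iInter_of_sequence_nonempty_isCompact_isClosed F hF_anti hF_nonempty
    hF_compact hF_closed

theorem kurLs_inter_nonempty_iff_exists_frequently {U : Set X} {T : Set (Set X)}
    (hT : ∀ V ∈ T, IsOpen V ∧ IsCompact (closure V) ∧ closure V ⊆ U) (hTU : ⋃₀ T = U) :
    (KurLs C ∩ U).Nonempty ↔ ∃ V ∈ T, ∃ᶠ m in atTop, (C m ∩ V).Nonempty := by
  constructor
  · rintro ⟨x, hxLs, hxU⟩
    obtain ⟨V, hVT, hxV⟩ := hTU ▸ hxU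
    exact ⟨V, hVT, mem_kurLs_iff.1 hxLs V ((hT V hVT).1.mem_nhds hxV)⟩
  · rintro ⟨V, hVT, hV⟩
    obtain ⟨x, hxLs, hxV⟩ := kurLs_inter_closure_nonempty_of_frequently (hT V hVT).2.1 hV
    exact ⟨x, hxLs, (hT V hVT).2.2 hxV⟩

end KuratowskiUpperLimit

theorem frechet_stmt11_general {X Ω : Type*} [MetricSpace X] [TopologicalSpace.SeparableSpace X]
    [LocallyCompactSpace X] [mΩ : MeasurableSpace Ω]
    (C : ℕ → Ω → Set X)
    (hmeas : ∀ n, @Measurable Ω (Set X) mΩ (effros X) (C n)) :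
    @Measurable Ω (Set X) mΩ (effros X) (fun ω => KurLs (fun n => C n ω)) := by
  have : SecondCountableTopology X := UniformSpace.secondCountable_of_separable X
  refine measurable_effros_iff.2 fun U hU => ?_
  obtain ⟨T, hTc, hT, hTU⟩ := exists_countable_cover_isCompact_closure hU
  simp_rw [kurLs_inter_nonempty_iff_exists_frequently hT hTU, ← exists_prop, ofPred_exists]
  exact .biUnion hTc fun V hV =>
    measurableSet_setOf_frequently fun m => measurable_effros_iff.1 (hmeas m) V (hT V hV).1

theorem frechet_stmt11 {X Ω : Type*} [MetricSpace X] [TopologicalSpace.SeparableSpace X]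
    [LocallyCompactSpace X] [mΩ : MeasurableSpace Ω]
    (P : Measure Ω) (hP : IsProbabilityMeasure P)
    (C : ℕ → Ω → Set X) (hclosed : ∀ n ω, IsClosed (C n ω))
    (hmeas : ∀ n, @Measurable Ω (Set X) mΩ (effros X) (C n)) :
    @Measurable Ω (Set X) mΩ (effros X) (fun ω => KurLs (fun n => C n ω)) :=
  frechet_stmt11_general (mΩ := mΩ) C hmeas
end

section
/- Let (X,d) be a compact metric space, 1 ≤ p < ∞, and μ a Borel probability measure on X. Let Y_1, Y_2, … be i.i.d. X-valued random elements with common distribution μ, and let bar μ_n := (1/n)∑_{i=1}^n δ_{Y_i}. Then for every ε > 0 there exist constants c_1, c_2 > 0 (depending on (X,d), μ, p, and ε) such that P(ρ(F_p(bar μ_n), F_p(μ)) ≥ ε) ≤ c_1 exp(−c_2 n) for all n ∈ ℕ. -/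
open MeasureTheory Filter Topology ProbabilityTheory

/-!
The Fréchet functions `fp p ν` of all probability measures `ν` on the compact space `X` are
equicontinuous. Since the continuous function `fp p μ` has a positive gap between its minimum and
its minimum over the compact set of points `ε/2`-far from `F_p(μ)`, every `ν` whose Fréchet
function is uniformly close to `fp p μ` has all its Fréchet means `ε/2`-close to `F_p(μ)`, and by
equicontinuity uniform closeness only needs to be checked on a finite net. At each net point,
`fp p (empMeasure Y n ω) t` is a sample mean of i.i.d. bounded variables, so Hoeffding's
inequality and a union bound over the net give the exponential rate.
-/

open scoped NNReal

section Hoeffding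

variable {Ω : Type*} [MeasurableSpace Ω] {P : Measure Ω} {Z : ℕ → Ω → ℝ} {a b m : ℝ}

theorem measure_le_sum_range_sub_le (hZ : iIndepFun Z P)
    (hZmeas : ∀ i, AEMeasurable (Z i) P) (hZab : ∀ i ω, Z i ω ∈ Set.Icc a b)
    (hm : ∀ i, P[Z i] = m) {ε : ℝ} (hε : 0 ≤ ε) {n : ℕ} (hn : 0 < n) :
    P {ω | n * ε ≤ ∑ i ∈ Finset.range n, (Z i ω - m)}
      ≤ ENNReal.ofReal (Real.exp (-(2 * ε ^ 2 / (b - a) ^ 2) * n)) := by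
  have := hZ.isProbabilityMeasure
  have hsubG (i : ℕ) : HasSubgaussianMGF (fun ω => Z i ω - m) ((‖b - a‖₊ / 2) ^ 2) P :=
    hm i ▸ hasSubgaussianMGF_of_mem_Icc (hZmeas i) (ae_of_all _ (hZab i))
  have hcentered : iIndepFun (fun i ω => Z i ω - m) P :=
    hZ.comp (fun _ z => z - m) fun _ => measurable_id.sub_const m
  have hexp : -(n * ε) ^ 2 / (2 * n * (((‖b - a‖₊ / 2) ^ 2 : ℝ≥0) : ℝ))
      = -(2 * ε ^ 2 / (b - a) ^ 2) * n := by
    have hn' : (n : ℝ) ≠ 0 := by positivity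
    push_cast
    rw [Real.norm_eq_abs, div_pow, sq_abs]
    field_simp
  rw [← ofReal_measureReal, ← hexp]
  exact ENNReal.ofReal_le_ofReal <| HasSubgaussianMGF.measure_sum_range_ge_le_of_iIndepFun
    hcentered (fun i _ => hsubG i) (by positivity)

theorem measure_le_abs_sampleMean_sub_le (hZ : iIndepFun Z P)
    (hZmeas : ∀ i, AEMeasurable (Z i) P) (hZab : ∀ i ω, Z i ω ∈ Set.Icc a b)
    (hm : ∀ i, P[Z i] = m) {ε : ℝ} (hε : 0 ≤ ε) {n : ℕ} (hn : 0 < n) :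
    P {ω | ε ≤ |(n : ℝ)⁻¹ * ∑ i ∈ Finset.range n, Z i ω - m|}
      ≤ ENNReal.ofReal (2 * Real.exp (-(2 * ε ^ 2 / (b - a) ^ 2) * n)) := by
  have upper := measure_le_sum_range_sub_le hZ hZmeas hZab hm hε hn
  have lower := measure_le_sum_range_sub_le (Z := fun i ω => -Z i ω) (a := -b) (b := -a) (m := -m)
    (hZ.comp (fun _ z => -z) fun _ => measurable_neg) (fun i => (hZmeas i).neg)
    (fun i ω => ⟨neg_le_neg (hZab i ω).2, neg_le_neg (hZab i ω).1⟩)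
    (fun i => (integral_neg (Z i)).trans (by rw [hm i])) hε hn
  rw [show -a - -b = b - a by ring] at lower
  have hn' : (0 : ℝ) < n := by positivity
  have hsub : {ω | ε ≤ |(n : ℝ)⁻¹ * ∑ i ∈ Finset.range n, Z i ω - m|}
      ⊆ {ω | n * ε ≤ ∑ i ∈ Finset.range n, (Z i ω - m)}
        ∪ {ω | n * ε ≤ ∑ i ∈ Finset.range n, (-Z i ω - -m)} := by
    intro ω hω
    have hmean : (n : ℝ)⁻¹ * ∑ i ∈ Finset.range n, Z i ω - m
        = (n : ℝ)⁻¹ * (∑ i ∈ Finset.range n, Z i ω - n * m) := by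
      field_simp
    simp only [Set.mem_ofPred_eq, hmean, le_abs', le_inv_mul_iff₀ hn', inv_mul_le_iff₀ hn'] at hω
    simp only [Set.mem_union, Set.mem_ofPred_eq, Finset.sum_sub_distrib, Finset.sum_neg_distrib,
      Finset.sum_const, Finset.card_range, nsmul_eq_mul]
    rcases hω with h | h
    exacts [Or.inr (by linarith), Or.inl (by linarith)]
  calc _ ≤ _ := measure_mono hsub
    _ ≤ _ := measure_union_le _ _
    _ ≤ _ := add_le_add upper lower
    _ = _ := by
      rw [← ENNReal.ofReal_add (by positivity) (by positivity)]
      ring_nf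

end Hoeffding

section FrechetFunction

open Metric

variable {X : Type*} [MetricSpace X] [CompactSpace X] {p : ℝ}

theorem exists_pos_forall_abs_dist_rpow_sub_lt (hp : 0 ≤ p) {η : ℝ} (hη : 0 < η) :
    ∃ r > 0, ∀ x x' y : X, dist x x' < r → |dist x y ^ p - dist x' y ^ p| < η := by
  have huc : UniformContinuous fun q : X × X => dist q.1 q.2 ^ p :=
    CompactSpace.uniformContinuous_of_continuous (continuous_dist.rpow_const fun _ => Or.inr hp)
  obtain ⟨r, hr, h⟩ := Metric.uniformContinuous_iff.mp huc η hη
  refine ⟨r, hr, fun x x' y hxx' => ?_⟩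
  simpa [Real.dist_eq] using h (a := (x, y)) (b := (x', y)) (by simpa [Prod.dist_eq] using hxx')

theorem dist_rpow_le_diam_rpow (hp : 0 ≤ p) (x y : X) :
    dist x y ^ p ≤ diam (Set.univ : Set X) ^ p :=
  Real.rpow_le_rpow dist_nonneg
    (dist_le_diam_of_mem isCompact_univ.isBounded (Set.mem_univ x) (Set.mem_univ y)) hp

variable [MeasurableSpace X] [BorelSpace X]

theorem integrable_dist_rpow (hp : 0 ≤ p) (ν : Measure X) [IsFiniteMeasure ν] (x : X) :
    Integrable (fun y => dist x y ^ p) ν :=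
  .of_bound
    ((continuous_const.dist continuous_id).rpow_const fun _ => Or.inr hp).aestronglyMeasurable _
    (ae_of_all _ fun y => by
      rw [Real.norm_of_nonneg (by positivity)]
      exact dist_rpow_le_diam_rpow hp x y)

theorem abs_fp_sub_fp_le (hp : 0 ≤ p) (ν : Measure X) [IsProbabilityMeasure ν] {x x' : X} {η : ℝ}
    (h : ∀ y, |dist x y ^ p - dist x' y ^ p| ≤ η) : |fp p ν x - fp p ν x'| ≤ η := by
  rw [fp, fp, ← integral_sub (integrable_dist_rpow hp ν x) (integrable_dist_rpow hp ν x')]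
  simpa using norm_integral_le_of_norm_le_const (μ := ν)
    (ae_of_all _ fun y => (Real.norm_eq_abs _).trans_le (h y))

theorem continuous_fp_s16 (hp : 0 ≤ p) (ν : Measure X) [IsProbabilityMeasure ν] :
    Continuous (fp p ν) :=
  Metric.continuous_iff.mpr fun x η hη => by
    obtain ⟨r, hr, h⟩ := exists_pos_forall_abs_dist_rpow_sub_lt (X := X) hp (half_pos hη)
    refine ⟨r, hr, fun x' hx' => ?_⟩
    rw [Real.dist_eq]
    exact (abs_fp_sub_fp_le hp ν fun y => (h x' x y hx').le).trans_lt (half_lt_self hη)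

theorem exists_finset_forall_abs_fp_sub_fp_lt (hp : 0 ≤ p) {δ : ℝ} (hδ : 0 < δ) :
    ∃ T : Finset X, ∀ (ν ν' : Measure X) [IsProbabilityMeasure ν] [IsProbabilityMeasure ν'],
      (∀ t ∈ T, |fp p ν t - fp p ν' t| < δ / 3) → ∀ x, |fp p ν x - fp p ν' x| < δ := by
  obtain ⟨r, hr, hclose⟩ :=
    exists_pos_forall_abs_dist_rpow_sub_lt (X := X) hp (div_pos hδ three_pos)
  obtain ⟨T, -, hT, hcover⟩ := finite_cover_balls_of_compact (isCompact_univ (X := X)) hr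
  refine ⟨hT.toFinset, fun ν ν' _ _ hnet x => ?_⟩
  obtain ⟨t, ht, hxt⟩ := Set.mem_iUnion₂.mp (hcover (Set.mem_univ x))
  have hν := abs_fp_sub_fp_le hp ν fun y => (hclose x t y hxt).le
  have hν' := abs_fp_sub_fp_le hp ν' fun y => (hclose x t y hxt).le
  have ht := hnet t (hT.mem_toFinset.mpr ht)
  have h₁ := abs_sub_le (fp p ν x) (fp p ν t) (fp p ν' x)
  have h₂ := abs_sub_le (fp p ν t) (fp p ν' t) (fp p ν' x)
  rw [abs_sub_comm (fp p ν' t)] at h₂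
  linarith

end FrechetFunction

section Argmin

open Metric

variable {X : Type*} [MetricSpace X] [CompactSpace X]

theorem exists_pos_infDist_argmin_lt {f : X → ℝ} (hf : Continuous f) {ε : ℝ} (hε : 0 < ε) :
    ∃ δ > 0, ∀ g : X → ℝ, (∀ x, |g x - f x| < δ) →
      ∀ x, (∀ x', g x ≤ g x') → infDist x {x | ∀ x', f x ≤ f x'} < ε := by
  set A := {x | ∀ x', f x ≤ f x'}
  set K := {x | ε ≤ infDist x A}
  rcases K.eq_empty_or_nonempty with hK | ⟨k, hk⟩
  · exact ⟨1, one_pos, fun _ _ x _ => not_le.mp fun hx => hK.subset hx⟩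
  have : Nonempty X := ⟨k⟩
  obtain ⟨x₀, -, hx₀⟩ := isCompact_univ.exists_isMinOn Set.univ_nonempty hf.continuousOn
  have hKcompact : IsCompact K :=
    (isClosed_le continuous_const (continuous_infDist_pt A)).isCompact
  obtain ⟨x₁, hx₁K, hx₁⟩ := hKcompact.exists_isMinOn ⟨k, hk⟩ hf.continuousOn
  have hgap : f x₀ < f x₁ := by
    refine (hx₀ (Set.mem_univ x₁)).lt_of_ne fun h => ?_
    have hx₁A : x₁ ∈ A := fun x' => h ▸ hx₀ (Set.mem_univ x')
    have : ε ≤ 0 := infDist_zero_of_mem hx₁A ▸ hx₁K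
    linarith
  refine ⟨(f x₁ - f x₀) / 2, by linarith, fun g hg x hx => not_le.mp fun hxK => ?_⟩
  have h₁ := abs_lt.mp (hg x)
  have h₀ := abs_lt.mp (hg x₀)
  linarith [isMinOn_iff.mp hx₁ x hxK, hx x₀]

end Argmin

theorem Fp_univ {X : Type*} [MetricSpace X] [MeasurableSpace X] (p : ℝ) (μ : Measure X) :
    Fp p μ Set.univ = {x | ∀ x', fp p μ x ≤ fp p μ x'} := by
  ext
  simp [Fp]

theorem rho_le {X : Type*} [MetricSpace X] {C C' : Set X} {r : ℝ} (hr : 0 ≤ r)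
    (h : ∀ x ∈ C, Metric.infDist x C' ≤ r) : rho C C' ≤ r :=
  Real.iSup_le (fun x => Real.iSup_le (h x) hr) hr

theorem exists_finset_le_abs_fp_sub_of_le_rho {X : Type*} [MetricSpace X] [CompactSpace X]
    [MeasurableSpace X] [BorelSpace X] {p : ℝ} (hp : 0 ≤ p) (μ : Measure X)
    [IsProbabilityMeasure μ] {ε : ℝ} (hε : 0 < ε) :
    ∃ (T : Finset X) (a : ℝ), 0 < a ∧ ∀ (ν : Measure X) [IsProbabilityMeasure ν],
      ε ≤ rho (Fp p ν Set.univ) (Fp p μ Set.univ) → ∃ t ∈ T, a ≤ |fp p ν t - fp p μ t| := by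
  obtain ⟨δ, hδ, hargmin⟩ := exists_pos_infDist_argmin_lt (continuous_fp_s16 hp μ) (half_pos hε)
  obtain ⟨T, hT⟩ := exists_finset_forall_abs_fp_sub_fp_lt (X := X) hp hδ
  refine ⟨T, δ / 3, by positivity, fun ν _ hρ => ?_⟩
  by_contra! hnet
  rw [Fp_univ, Fp_univ] at hρ
  exact hρ.not_gt <| (rho_le (half_pos hε).le fun x hx =>
    (hargmin _ (hT ν μ hnet) x hx).le).trans_lt (half_lt_self hε)

section Empirical

variable {X Ω : Type*} [MeasurableSpace X] (Y : ℕ → Ω → X)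

theorem isProbabilityMeasure_empMeasure {n : ℕ} (hn : n ≠ 0) (ω : Ω) :
    IsProbabilityMeasure (empMeasure Y n ω) := by
  constructor
  simp only [empMeasure, Measure.smul_apply, Measure.coe_finsetSum, Finset.sum_apply,
    measure_univ, Finset.sum_const, Finset.card_range, nsmul_eq_mul, mul_one, smul_eq_mul]
  exact ENNReal.inv_mul_cancel (by exact_mod_cast hn) (ENNReal.natCast_ne_top n)

theorem integral_empMeasure [MeasurableSingletonClass X] {E : Type*} [NormedAddCommGroup E]
    [NormedSpace ℝ E] [CompleteSpace E] (f : X → E) (n : ℕ) (ω : Ω) :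
    ∫ x, f x ∂(empMeasure Y n ω) = (n : ℝ)⁻¹ • ∑ i ∈ Finset.range n, f (Y i ω) := by
  rw [empMeasure, integral_smul_measure,
    integral_finsetSum_measure fun i _ => integrable_dirac enorm_lt_top]
  simp [integral_dirac]

theorem measure_le_abs_fp_empMeasure_sub_le [MetricSpace X] [CompactSpace X] [BorelSpace X]
    [MeasurableSpace Ω] {p : ℝ} (hp : 0 ≤ p) {μ : Measure X} {P : Measure Ω}
    (hYmeas : ∀ i, Measurable (Y i)) (hindep : iIndepFun Y P)
    (hlaw : ∀ i, Measure.map (Y i) P = μ) (t : X) {a : ℝ} (ha : 0 ≤ a) {n : ℕ} (hn : 0 < n) :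
    P {ω | a ≤ |fp p (empMeasure Y n ω) t - fp p μ t|}
      ≤ ENNReal.ofReal (2 * Real.exp
          (-(2 * a ^ 2 / (Metric.diam (Set.univ : Set X) ^ p + 1) ^ 2) * n)) := by
  have hcont : Continuous fun y => dist t y ^ p :=
    (continuous_const.dist continuous_id).rpow_const fun _ => Or.inr hp
  -- the `+ 1` keeps the range nondegenerate, so that the rate is positive
  have hbound (y : X) : dist t y ^ p ∈ Set.Icc 0 (Metric.diam (Set.univ : Set X) ^ p + 1) :=
    ⟨by positivity, (dist_rpow_le_diam_rpow hp t y).trans (le_add_of_nonneg_right zero_le_one)⟩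
  have hmean (i : ℕ) : P[fun ω => dist t (Y i ω) ^ p] = fp p μ t := by
    rw [fp, ← hlaw i, integral_map (hYmeas i).aemeasurable hcont.aestronglyMeasurable]
  simpa only [fp, integral_empMeasure, smul_eq_mul, sub_zero, Function.comp_apply] using
    measure_le_abs_sampleMean_sub_le (hindep.comp _ fun _ => hcont.measurable)
      (fun i => (hcont.measurable.comp (hYmeas i)).aemeasurable) (fun i ω => hbound (Y i ω))
      hmean ha hn

end Empirical

theorem frechet_stmt16_general {X : Type*} [MetricSpace X] [CompactSpace X]
    [MeasurableSpace X] [BorelSpace X]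
    (p : ℝ) (hp : 1 ≤ p)
    (μ : Measure X)
    {Ω : Type*} [MeasurableSpace Ω] (P : Measure Ω)
    (Y : ℕ → Ω → X) (hYmeas : ∀ i, Measurable (Y i))
    (hindep : iIndepFun Y P)
    (hlaw : ∀ i, Measure.map (Y i) P = μ) :
    ∀ ε : ℝ, 0 < ε → ∃ c₁ c₂ : ℝ, 0 < c₁ ∧ 0 < c₂ ∧
      ∀ n : ℕ, 1 ≤ n →
        P {ω | ε ≤ rho (Fp p (empMeasure Y n ω) Set.univ) (Fp p μ Set.univ)}
          ≤ ENNReal.ofReal (c₁ * Real.exp (-c₂ * n)) := by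
  intro ε hε
  have := hindep.isProbabilityMeasure
  have : IsProbabilityMeasure μ := hlaw 0 ▸ Measure.isProbabilityMeasure_map (hYmeas 0).aemeasurable
  have hp₀ : 0 ≤ p := by linarith
  obtain ⟨T, a, ha, hT⟩ := exists_finset_le_abs_fp_sub_of_le_rho hp₀ μ hε
  set c₂ := 2 * a ^ 2 / (Metric.diam (Set.univ : Set X) ^ p + 1) ^ 2
  refine ⟨2 * T.card + 1, c₂, by positivity, by positivity, fun n hn => ?_⟩
  calc P {ω | ε ≤ rho (Fp p (empMeasure Y n ω) Set.univ) (Fp p μ Set.univ)}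
      ≤ P (⋃ t ∈ T, {ω | a ≤ |fp p (empMeasure Y n ω) t - fp p μ t|}) :=
        measure_mono fun ω hω => by
          have := isProbabilityMeasure_empMeasure Y (by omega : n ≠ 0) ω
          simpa using hT _ hω
    _ ≤ ∑ t ∈ T, P {ω | a ≤ |fp p (empMeasure Y n ω) t - fp p μ t|} :=
        measure_biUnion_finset_le _ _
    _ ≤ ∑ _t ∈ T, ENNReal.ofReal (2 * Real.exp (-c₂ * n)) :=
        Finset.sum_le_sum fun t _ =>
          measure_le_abs_fp_empMeasure_sub_le Y hp₀ hYmeas hindep hlaw t ha.le hn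
    _ ≤ ENNReal.ofReal ((2 * T.card + 1) * Real.exp (-c₂ * n)) := by
        rw [Finset.sum_const, nsmul_eq_mul, ← ENNReal.ofReal_natCast,
          ← ENNReal.ofReal_mul (by positivity)]
        exact ENNReal.ofReal_le_ofReal (by nlinarith [Real.exp_pos (-c₂ * n)])

theorem frechet_stmt16 {X : Type*} [MetricSpace X] [CompactSpace X]
    [MeasurableSpace X] [BorelSpace X]
    (p : ℝ) (hp : 1 ≤ p)
    (μ : Measure X) (hμprob : IsProbabilityMeasure μ)
    {Ω : Type*} [MeasurableSpace Ω] (P : Measure Ω) (hPprob : IsProbabilityMeasure P)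
    (Y : ℕ → Ω → X) (hYmeas : ∀ i, Measurable (Y i))
    (hindep : iIndepFun Y P)
    (hlaw : ∀ i, Measure.map (Y i) P = μ) :
    ∀ ε : ℝ, 0 < ε → ∃ c₁ c₂ : ℝ, 0 < c₁ ∧ 0 < c₂ ∧
      ∀ n : ℕ, 1 ≤ n →
        P {ω | ε ≤ rho (Fp p (empMeasure Y n ω) Set.univ) (Fp p μ Set.univ)}
          ≤ ENNReal.ofReal (c₁ * Real.exp (-c₂ * n)) :=
  frechet_stmt16_general p hp μ P Y hYmeas hindep hlaw
end

section
/- Let (X,d) be a finite metric space, 1 ≤ p < ∞, and μ a probability measure on X. Let Y_1, Y_2, … be i.i.d. X-valued random elements with common distribution μ, and let bar μ_n := (1/n)∑_{i=1}^n δ_{Y_i}. Then F_p(bar μ_n) → F_p(μ) in the Hausdorff metric almost surely (i.e., almost surely both ρ(F_p(bar μ_n), F_p(μ)) → 0 and ρ(F_p(μ), F_p(bar μ_n)) → 0) if and only if F_p(μ) = [x]_μ for some x ∈ X; and likewise F_p^*(bar μ_n) → F_p^*(μ) in the Hausdorff metric almost surely if and only if F_p^*(μ) = [x]_μ for some x ∈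 X. -/
open MeasureTheory Filter Topology ProbabilityTheory

/-! On a finite space, Hausdorff convergence of sets is eventual equality, so the claim is that
almost surely `F_p(μ̄_n) = F_p(μ)` for all large `n` exactly when `F_p(μ)` is a single class
`[x]_μ`. By the strong law, `f_p(μ̄_n, ·) → f_p(μ, ·)` pointwise, so points outside `F_p(μ)`
eventually stop minimising `f_p(μ̄_n, ·)`. If `F_p(μ)` is one class, the samples almost surely avoid
the null set where the distance functions of its points differ, so `f_p(μ̄_n, ·)` is constant on
`F_p(μ)` and the empirical means are eventually all of `F_p(μ)`. Conversely, if `x, x' ∈ F_p(μ)`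
are not equivalent, the second Borel–Cantelli lemma puts infinitely many samples where
`d(x, ·) ≠ d(x', ·)`, and every such sample breaks the equality `f_p(μ̄_n, x) = f_p(μ̄_n, x')` that
eventual equality forces. For the restricted mean, the empirical support is eventually `supp μ`. -/

section Rho

variable {X : Type*} [MetricSpace X]

lemma exists_pos_forall_dist_lt_imp_eq [Finite X] : ∃ ε > 0, ∀ a b : X, dist a b < ε → a = b := by
  have hdiag : {q : X × X | q.1 = q.2} ∈ uniformity X := by
    rw [compactSpace_uniformity, Filter.mem_iSup]
    intro x
    simp [nhds_discrete]
  obtain ⟨ε, hε, h⟩ := Metric.mem_uniformity_dist.1 hdiag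
  exact ⟨ε, hε, fun a b hab => h hab⟩

lemma infDist_le_rho [Finite X] {C C' : Set X} {x : X} (hx : x ∈ C) :
    Metric.infDist x C' ≤ rho C C' := by
  let g : X → ℝ := fun x => ⨆ _ : x ∈ C, Metric.infDist x C'
  calc Metric.infDist x C' = g x := (ciSup_pos (f := fun _ => Metric.infDist x C') hx).symm
    _ ≤ rho C C' := le_ciSup (Set.finite_range g).bddAbove x

lemma rho_eq_zero_of_subset {C C' : Set X} (h : C ⊆ C') : rho C C' = 0 :=
  le_antisymm
    (Real.iSup_nonpos fun _ => Real.iSup_nonpos fun hx => (Metric.infDist_zero_of_mem (h hx)).le)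
    (Real.iSup_nonneg fun _ => Real.iSup_nonneg fun _ => Metric.infDist_nonneg)

lemma subset_of_rho_lt [Finite X] {C C' : Set X} (hC' : C'.Nonempty) {ε : ℝ}
    (hε : ∀ a b : X, dist a b < ε → a = b) (h : rho C C' < ε) : C ⊆ C' := by
  intro x hx
  obtain ⟨y, hy, hxy⟩ := (Metric.infDist_lt_iff hC').1 ((infDist_le_rho hx).trans_lt h)
  rwa [hε x y hxy]

lemma tendsto_rho_zero_iff_eventually_eq [Finite X] {ι : Type*} {l : Filter ι} {A : ι → Set X}
    {B : Set X} (hA : ∀ᶠ i in l, (A i).Nonempty) (hB : B.Nonempty) :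
    (Tendsto (fun i => rho (A i) B) l (𝓝 0) ∧ Tendsto (fun i => rho B (A i)) l (𝓝 0)) ↔
      ∀ᶠ i in l, A i = B := by
  constructor
  · rintro ⟨hAB, hBA⟩
    obtain ⟨ε, hε, hsep⟩ := exists_pos_forall_dist_lt_imp_eq (X := X)
    filter_upwards [hA, hAB.eventually_lt_const hε, hBA.eventually_lt_const hε] with i hAi h₁ h₂
    exact (subset_of_rho_lt hB hsep h₁).antisymm (subset_of_rho_lt hAi hsep h₂)
  · intro h
    constructor <;> refine tendsto_const_nhds.congr' (h.mono fun i hi => ?_) <;>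
      simp [hi, rho_eq_zero_of_subset]

end Rho

section FrechetMean

variable {X : Type*} [MetricSpace X] [MeasurableSpace X] {p : ℝ}

lemma Fp_nonempty [Finite X] (ν : Measure X) {S : Set X} (hS : S.Nonempty) :
    (Fp p ν S).Nonempty := by
  obtain ⟨x, hx, hmin⟩ := S.exists_min_image (fp p ν) S.toFinite hS
  exact ⟨x, hx, hmin⟩

lemma fp_eq_of_mem_Fp {ν : Measure X} {S : Set X} {x x' : X} (hx : x ∈ Fp p ν S)
    (hx' : x' ∈ Fp p ν S) : fp p ν x = fp p ν x' :=
  le_antisymm (hx.2 x' hx'.1) (hx'.2 x hx.1)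

lemma fp_congr_of_ae_dist_eq {ν : Measure X} {x x' : X} (h : ∀ᵐ y ∂ν, dist x y = dist x' y) :
    fp p ν x = fp p ν x' :=
  integral_congr_ae (h.mono fun y hy => by simp only [hy])

lemma mem_Fp_of_ae_dist_eq {ν : Measure X} {S : Set X} {x x' : X} (hx : x ∈ Fp p ν S)
    (hx'S : x' ∈ S) (h : ∀ᵐ y ∂ν, dist x y = dist x' y) : x' ∈ Fp p ν S :=
  ⟨hx'S, fun z hz => (fp_congr_of_ae_dist_eq h).symm.le.trans (hx.2 z hz)⟩

lemma eventually_Fp_subset [Finite X] {ι : Type*} {l : Filter ι} {ν : ι → Measure X}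
    {μ : Measure X} (h : ∀ x, Tendsto (fun i => fp p (ν i) x) l (𝓝 (fp p μ x))) (S : Set X) :
    ∀ᶠ i in l, Fp p (ν i) S ⊆ Fp p μ S := by
  have hpt : ∀ x, ∀ᶠ i in l, x ∈ Fp p (ν i) S → x ∈ Fp p μ S := by
    intro x
    by_cases hx : x ∈ Fp p μ S
    · exact .of_forall fun _ _ => hx
    by_cases hxS : x ∈ S
    · obtain ⟨x', hx'S, hlt⟩ : ∃ x' ∈ S, fp p μ x' < fp p μ x := by simpa [Fp, hxS] using hx
      filter_upwards [(h x').eventually_lt (h x) hlt] with i hi hxi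
      exact absurd (hxi.2 x' hx'S) hi.not_ge
    · exact .of_forall fun _ hxi => absurd hxi.1 hxS
  filter_upwards [eventually_all.2 hpt] with i hi x hx using hi x hx

lemma Fp_eq_of_subset_of_forall_fp_eq {ν μ : Measure X} {S : Set X}
    (hsub : Fp p ν S ⊆ Fp p μ S) (hne : (Fp p ν S).Nonempty)
    (hconst : ∀ x ∈ Fp p μ S, ∀ x' ∈ Fp p μ S, fp p ν x = fp p ν x') :
    Fp p ν S = Fp p μ S := by
  refine hsub.antisymm fun w hw => ?_
  obtain ⟨z, hz⟩ := hne
  exact ⟨hw.1, fun x' hx' => (hconst w hw z (hsub hz)).le.trans (hz.2 x' hx')⟩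

end FrechetMean

section Support

variable {X : Type*} [MetricSpace X] [DiscreteTopology X] [MeasurableSpace X]

lemma mem_msupport_iff {ν : Measure X} {x : X} : x ∈ msupport ν ↔ ν {x} ≠ 0 :=
  ⟨fun h => (h {x} (isOpen_discrete _) rfl).ne', fun h _ _ hxU =>
    (pos_iff_ne_zero.2 h).trans_le (measure_mono (Set.singleton_subset_iff.2 hxU))⟩

lemma mem_msupport_empMeasure [MeasurableSingletonClass X] {Ω : Type*} {Y : ℕ → Ω → X} {n : ℕ}
    {ω : Ω} {z : X} : z ∈ msupport (empMeasure Y n ω) ↔ ∃ i < n, Y i ω = z := by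
  simp [mem_msupport_iff, empMeasure]

variable [Countable X]

lemma ae_mem_msupport (μ : Measure X) : ∀ᵐ y ∂μ, y ∈ msupport μ :=
  ae_iff_of_countable.2 fun _ => mem_msupport_iff.2

lemma msupport_nonempty (μ : Measure X) [NeZero μ] : (msupport μ).Nonempty :=
  (ae_mem_msupport μ).exists

lemma mem_msupport_of_ae_dist_eq {μ : Measure X} {x x' : X} (hx : x ∈ msupport μ)
    (h : ∀ᵐ y ∂μ, dist x y = dist x' y) : x' ∈ msupport μ := by
  have hxx : dist x x = dist x' x := ae_iff_of_countable.1 h x (mem_msupport_iff.1 hx)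
  rwa [dist_eq_zero.1 (by rw [← hxx, dist_self] : dist x' x = 0)]

end Support

section Empirical

variable {X Ω : Type*} [MetricSpace X] [Finite X] [MeasurableSpace X] [MeasurableSingletonClass X]
  {p : ℝ} {Y : ℕ → Ω → X} {ω : Ω} {x x' : X}

lemma fp_empMeasure (n : ℕ) :
    fp p (empMeasure Y n ω) x = (n : ℝ)⁻¹ * ∑ i ∈ Finset.range n, dist x (Y i ω) ^ p := by
  rw [fp, empMeasure, integral_smul_measure,
    integral_finsetSum_measure fun i _ => Integrable.of_finite]
  simp [integral_dirac]

lemma fp_empMeasure_congr (h : ∀ i, dist x (Y i ω) = dist x' (Y i ω)) (n : ℕ) :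
    fp p (empMeasure Y n ω) x = fp p (empMeasure Y n ω) x' := by
  simp only [fp_empMeasure, h]

lemma eventually_eq_of_eventually_sum_range_eq {M : Type*} [AddCancelCommMonoid M] {a b : ℕ → M}
    (h : ∀ᶠ n in atTop, ∑ i ∈ Finset.range n, a i = ∑ i ∈ Finset.range n, b i) :
    ∀ᶠ n in atTop, a n = b n := by
  filter_upwards [h, (tendsto_add_atTop_nat 1).eventually h] with n h₀ h₁
  rw [Finset.sum_range_succ, Finset.sum_range_succ, h₀] at h₁
  exact add_left_cancel h₁

lemma eventually_dist_eq_of_eventually_fp_empMeasure_eq (hp : p ≠ 0)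
    (h : ∀ᶠ n in atTop, fp p (empMeasure Y n ω) x = fp p (empMeasure Y n ω) x') :
    ∀ᶠ i in atTop, dist x (Y i ω) = dist x' (Y i ω) := by
  have hsum : ∀ᶠ n in atTop,
      ∑ i ∈ Finset.range n, dist x (Y i ω) ^ p = ∑ i ∈ Finset.range n, dist x' (Y i ω) ^ p := by
    filter_upwards [h, eventually_ne_atTop 0] with n hn hn0
    rw [fp_empMeasure, fp_empMeasure] at hn
    exact mul_left_cancel₀ (by positivity) hn
  filter_upwards [eventually_eq_of_eventually_sum_range_eq hsum] with i hi
  exact Real.rpow_left_injOn hp dist_nonneg dist_nonneg hi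

end Empirical

section Sampling

variable {X Ω : Type*} [MeasurableSpace X] [MeasurableSpace Ω] {P : Measure Ω} {μ : Measure X}
  {Y : ℕ → Ω → X}

lemma ae_forall_of_ae (hYmeas : ∀ i, Measurable (Y i)) (hlaw : ∀ i, P.map (Y i) = μ)
    {q : X → Prop} (h : ∀ᵐ y ∂μ, q y) : ∀ᵐ ω ∂P, ∀ i, q (Y i ω) :=
  ae_all_iff.2 fun i => ae_of_ae_map (hYmeas i).aemeasurable ((hlaw i).symm ▸ h)

lemma ae_frequently_mem (hYmeas : ∀ i, Measurable (Y i)) (hindep : iIndepFun Y P)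
    (hlaw : ∀ i, P.map (Y i) = μ) {D : Set X} (hD : MeasurableSet D) (hμD : μ D ≠ 0) :
    ∀ᵐ ω ∂P, ∃ᶠ i in atTop, Y i ω ∈ D := by
  have := hindep.isProbabilityMeasure
  have hmeas : ∀ i, MeasurableSet (Y i ⁻¹' D) := fun i => hD.preimage (hYmeas i)
  have hlawD : ∀ i, P (Y i ⁻¹' D) = μ D := fun i => by
    rw [← hlaw i, Measure.map_apply (hYmeas i) hD]
  have hindepD : iIndepSet (fun i => Y i ⁻¹' D) P :=
    (iIndepSet_iff_meas_biInter hmeas).2 fun s =>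
      hindep.measure_inter_preimage_eq_mul s fun _ _ => hD
  have hlimsup : P (limsup (fun i => Y i ⁻¹' D) atTop) = 1 :=
    measure_limsup_eq_one hmeas hindepD (by simp [hlawD, ENNReal.tsum_const_eq_top_of_ne_zero hμD])
  have hae : limsup (fun i => Y i ⁻¹' D) atTop ∈ ae P :=
    mem_ae_iff.2 ((prob_compl_eq_zero_iff (.measurableSet_limsup hmeas)).2 hlimsup)
  filter_upwards [hae] with ω hω using mem_limsup_iff_frequently_mem.1 hω

lemma ae_tendsto_fp_empMeasure [MetricSpace X] [Finite X] [DiscreteMeasurableSpace X]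
    [IsFiniteMeasure μ] (hYmeas : ∀ i, Measurable (Y i)) (hindep : iIndepFun Y P)
    (hlaw : ∀ i, P.map (Y i) = μ) (p : ℝ) :
    ∀ᵐ ω ∂P, ∀ x, Tendsto (fun n => fp p (empMeasure Y n ω) x) atTop (𝓝 (fp p μ x)) := by
  refine ae_all_iff.2 fun x => ?_
  let g : X → ℝ := fun y => dist x y ^ p
  have hg : Measurable g := .of_discrete
  have hint : Integrable (fun ω => g (Y 0 ω)) P := by
    have : Integrable g (P.map (Y 0)) := by rw [hlaw 0]; exact .of_finite
    exact (integrable_map_measure hg.aestronglyMeasurable (hYmeas 0).aemeasurable).1 this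
  have hmean : ∫ ω, g (Y 0 ω) ∂P = fp p μ x := by
    rw [fp, ← hlaw 0, integral_map (hYmeas 0).aemeasurable hg.aestronglyMeasurable]
  have hident : ∀ i, IdentDistrib (fun ω => g (Y i ω)) (fun ω => g (Y 0 ω)) P P := fun i =>
    (IdentDistrib.mk (hYmeas i).aemeasurable (hYmeas 0).aemeasurable
      ((hlaw i).trans (hlaw 0).symm)).comp hg
  filter_upwards [strong_law_ae (fun i ω => g (Y i ω)) hint
    (fun i j hij => (hindep.indepFun hij).comp hg hg) hident] with ω hω
  rw [← hmean]
  simpa [fp_empMeasure, g] using hω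

end Sampling

section Consistency

variable {X Ω : Type*} [MetricSpace X] [Finite X] [MeasurableSpace X] [DiscreteMeasurableSpace X]
  [MeasurableSpace Ω] {P : Measure Ω} {μ : Measure X} {Y : ℕ → Ω → X} {p : ℝ}

lemma ae_eventually_msupport_empMeasure_eq (hYmeas : ∀ i, Measurable (Y i))
    (hindep : iIndepFun Y P) (hlaw : ∀ i, P.map (Y i) = μ) :
    ∀ᵐ ω ∂P, ∀ᶠ n in atTop, msupport (empMeasure Y n ω) = msupport μ := by
  have hhit : ∀ᵐ ω ∂P, ∀ z ∈ msupport μ, ∃ i, Y i ω = z :=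
    (ae_ball_iff (Set.to_countable _)).2 fun z hz =>
      (ae_frequently_mem hYmeas hindep hlaw (measurableSet_singleton z)
        (mem_msupport_iff.1 hz)).mono fun _ h => h.exists
  filter_upwards [ae_forall_of_ae hYmeas hlaw (ae_mem_msupport μ), hhit] with ω hmem hhit
  have hcover : ∀ᶠ n in atTop, ∀ z ∈ msupport μ, ∃ i < n, Y i ω = z :=
    (eventually_all_finite (Set.toFinite _)).2 fun z hz =>
      let ⟨i, hi⟩ := hhit z hz
      (eventually_gt_atTop i).mono fun _ hn => ⟨i, hn, hi⟩
  filter_upwards [hcover] with n hn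
  ext z
  rw [mem_msupport_empMeasure]
  exact ⟨fun ⟨i, _, hi⟩ => hi ▸ hmem i, hn z⟩

lemma ae_eventually_Fp_empMeasure_eq [IsFiniteMeasure μ] (hYmeas : ∀ i, Measurable (Y i))
    (hindep : iIndepFun Y P) (hlaw : ∀ i, P.map (Y i) = μ) {S : Set X} (hS : S.Nonempty) {x : X}
    (hF : Fp p μ S = {x' | ∀ᵐ y ∂μ, dist x y = dist x' y}) :
    ∀ᵐ ω ∂P, ∀ᶠ n in atTop, Fp p (empMeasure Y n ω) S = Fp p μ S := by
  have hsame : ∀ᵐ ω ∂P, ∀ a ∈ Fp p μ S, ∀ i, dist x (Y i ω) = dist a (Y i ω) :=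
    (ae_ball_iff (Set.to_countable _)).2 fun a ha =>
      ae_forall_of_ae hYmeas hlaw (by rw [hF] at ha; exact ha)
  filter_upwards [ae_tendsto_fp_empMeasure hYmeas hindep hlaw p, hsame] with ω hconv hsame
  filter_upwards [eventually_Fp_subset hconv S] with n hsub
  refine Fp_eq_of_subset_of_forall_fp_eq hsub (Fp_nonempty _ hS) fun a ha b hb => ?_
  rw [← fp_empMeasure_congr (hsame a ha), fp_empMeasure_congr (hsame b hb)]

lemma Fp_eq_setOf_ae_dist_eq_of_ae_eventually (hp : p ≠ 0) (hYmeas : ∀ i, Measurable (Y i))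
    (hindep : iIndepFun Y P) (hlaw : ∀ i, P.map (Y i) = μ) {S : Set X} (hS : S.Nonempty)
    (hclosed : ∀ x ∈ Fp p μ S, ∀ x', (∀ᵐ y ∂μ, dist x y = dist x' y) → x' ∈ S)
    (h : ∀ᵐ ω ∂P, ∀ᶠ n in atTop, Fp p (empMeasure Y n ω) S = Fp p μ S) :
    ∃ x, Fp p μ S = {x' | ∀ᵐ y ∂μ, dist x y = dist x' y} := by
  have := hindep.isProbabilityMeasure
  obtain ⟨x, hx⟩ := Fp_nonempty μ hS
  refine ⟨x, Set.Subset.antisymm (fun x' hx' => ?_)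
    fun x' hx' => mem_Fp_of_ae_dist_eq hx (hclosed x hx x' hx') hx'⟩
  by_contra hne
  have hD : μ {y | ¬ dist x y = dist x' y} ≠ 0 := frequently_ae_iff.1 (not_eventually.1 hne)
  obtain ⟨ω, hω, hfreq⟩ :=
    (h.and (ae_frequently_mem hYmeas hindep hlaw .of_discrete hD)).exists
  have hfp : ∀ᶠ n in atTop, fp p (empMeasure Y n ω) x = fp p (empMeasure Y n ω) x' :=
    hω.mono fun n hn => fp_eq_of_mem_Fp (hn ▸ hx) (hn ▸ hx')
  exact hfreq ((eventually_dist_eq_of_eventually_fp_empMeasure_eq hp hfp).mono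
    fun _ hi hne => hne hi)

theorem ae_tendsto_rho_Fp_empMeasure_iff [IsFiniteMeasure μ] (hp : p ≠ 0)
    (hYmeas : ∀ i, Measurable (Y i)) (hindep : iIndepFun Y P) (hlaw : ∀ i, P.map (Y i) = μ)
    {S : Set X} (hS : S.Nonempty)
    (hclosed : ∀ x ∈ Fp p μ S, ∀ x', (∀ᵐ y ∂μ, dist x y = dist x' y) → x' ∈ S)
    (T : ℕ → Ω → Set X) (hT : ∀ᵐ ω ∂P, ∀ᶠ n in atTop, T n ω = S) :
    (∀ᵐ ω ∂P,
        Tendsto (fun n => rho (Fp p (empMeasure Y n ω) (T n ω)) (Fp p μ S)) atTop (𝓝 0) ∧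
        Tendsto (fun n => rho (Fp p μ S) (Fp p (empMeasure Y n ω) (T n ω))) atTop (𝓝 0)) ↔
      ∃ x, Fp p μ S = {x' | ∀ᵐ y ∂μ, dist x y = dist x' y} := by
  refine Iff.trans ?_ ⟨Fp_eq_setOf_ae_dist_eq_of_ae_eventually hp hYmeas hindep hlaw hS hclosed,
    fun ⟨x, hx⟩ => ae_eventually_Fp_empMeasure_eq hYmeas hindep hlaw hS hx⟩
  refine eventually_congr ?_
  filter_upwards [hT] with ω hω
  have hTS : ∀ᶠ n in atTop, Fp p (empMeasure Y n ω) (T n ω) = Fp p (empMeasure Y n ω) S :=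
    hω.mono fun n hn => by rw [hn]
  rw [tendsto_rho_zero_iff_eventually_eq (hTS.mono fun n hn => hn ▸ Fp_nonempty _ hS)
    (Fp_nonempty μ hS)]
  exact eventually_congr (hTS.mono fun n hn => by rw [hn])

end Consistency

theorem frechet_stmt19_general {X : Type*} [MetricSpace X] [Finite X]
    [MeasurableSpace X] [BorelSpace X]
    (p : ℝ) (hp : 1 ≤ p)
    (μ : Measure X) (hμprob : IsProbabilityMeasure μ)
    {Ω : Type*} [MeasurableSpace Ω] (P : Measure Ω)
    (Y : ℕ → Ω → X) (hYmeas : ∀ i, Measurable (Y i))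
    (hindep : iIndepFun Y P)
    (hlaw : ∀ i, Measure.map (Y i) P = μ) :
    ((∀ᵐ ω ∂P,
        Tendsto (fun n => rho (Fp p (empMeasure Y (n + 1) ω) Set.univ) (Fp p μ Set.univ))
          atTop (𝓝 0) ∧
        Tendsto (fun n => rho (Fp p μ Set.univ) (Fp p (empMeasure Y (n + 1) ω) Set.univ))
          atTop (𝓝 0)) ↔
      (∃ x : X, Fp p μ Set.univ = {x' : X | ∀ᵐ y ∂μ, dist x y = dist x' y})) ∧
    ((∀ᵐ ω ∂P,
        Tendsto (fun n =>
            rho (Fp p (empMeasure Y (n + 1) ω) (msupport (empMeasure Y (n + 1) ω)))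
              (Fp p μ (msupport μ)))
          atTop (𝓝 0) ∧
        Tendsto (fun n =>
            rho (Fp p μ (msupport μ))
              (Fp p (empMeasure Y (n + 1) ω) (msupport (empMeasure Y (n + 1) ω))))
          atTop (𝓝 0)) ↔
      (∃ x : X, Fp p μ (msupport μ) = {x' : X | ∀ᵐ y ∂μ, dist x y = dist x' y})) := by
  have hp0 : p ≠ 0 := (zero_lt_one.trans_le hp).ne'
  have hshift : ∀ T : ℕ → Ω → Set X, ∀ S : Set X,
      (∀ᵐ ω ∂P,
        Tendsto (fun n => rho (Fp p (empMeasure Y (n + 1) ω) (T (n + 1) ω)) (Fp p μ S))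
          atTop (𝓝 0) ∧
        Tendsto (fun n => rho (Fp p μ S) (Fp p (empMeasure Y (n + 1) ω) (T (n + 1) ω)))
          atTop (𝓝 0)) ↔
      (∀ᵐ ω ∂P,
        Tendsto (fun n => rho (Fp p (empMeasure Y n ω) (T n ω)) (Fp p μ S)) atTop (𝓝 0) ∧
        Tendsto (fun n => rho (Fp p μ S) (Fp p (empMeasure Y n ω) (T n ω))) atTop (𝓝 0)) :=
    fun T S => eventually_congr (.of_forall fun ω =>
      (tendsto_add_atTop_iff_nat (f := fun n => rho (Fp p (empMeasure Y n ω) (T n ω)) _) 1).and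
        (tendsto_add_atTop_iff_nat (f := fun n => rho _ (Fp p (empMeasure Y n ω) (T n ω))) 1))
  constructor
  · rw [hshift (fun _ _ => Set.univ)]
    exact ae_tendsto_rho_Fp_empMeasure_iff hp0 hYmeas hindep hlaw
      ((msupport_nonempty μ).mono (Set.subset_univ _)) (fun _ _ _ _ => trivial) _
      (.of_forall fun _ => .of_forall fun _ => rfl)
  · rw [hshift (fun n ω => msupport (empMeasure Y n ω))]
    exact ae_tendsto_rho_Fp_empMeasure_iff hp0 hYmeas hindep hlaw (msupport_nonempty μ)
      (fun _ hx _ h => mem_msupport_of_ae_dist_eq hx.1 h) _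
      (ae_eventually_msupport_empMeasure_eq hYmeas hindep hlaw)

theorem frechet_stmt19 {X : Type*} [MetricSpace X] [Finite X]
    [MeasurableSpace X] [BorelSpace X]
    (p : ℝ) (hp : 1 ≤ p)
    (μ : Measure X) (hμprob : IsProbabilityMeasure μ)
    {Ω : Type*} [MeasurableSpace Ω] (P : Measure Ω) (hPprob : IsProbabilityMeasure P)
    (Y : ℕ → Ω → X) (hYmeas : ∀ i, Measurable (Y i))
    (hindep : iIndepFun Y P)
    (hlaw : ∀ i, Measure.map (Y i) P = μ) :
    ((∀ᵐ ω ∂P,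
        Tendsto (fun n => rho (Fp p (empMeasure Y (n + 1) ω) Set.univ) (Fp p μ Set.univ))
          atTop (𝓝 0) ∧
        Tendsto (fun n => rho (Fp p μ Set.univ) (Fp p (empMeasure Y (n + 1) ω) Set.univ))
          atTop (𝓝 0)) ↔
      (∃ x : X, Fp p μ Set.univ = {x' : X | ∀ᵐ y ∂μ, dist x y = dist x' y})) ∧
    ((∀ᵐ ω ∂P,
        Tendsto (fun n =>
            rho (Fp p (empMeasure Y (n + 1) ω) (msupport (empMeasure Y (n + 1) ω)))
              (Fp p μ (msupport μ)))
          atTop (𝓝 0) ∧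
        Tendsto (fun n =>
            rho (Fp p μ (msupport μ))
              (Fp p (empMeasure Y (n + 1) ω) (msupport (empMeasure Y (n + 1) ω))))
          atTop (𝓝 0)) ↔
      (∃ x : X, Fp p μ (msupport μ) = {x' : X | ∀ᵐ y ∂μ, dist x y = dist x' y})) :=
  frechet_stmt19_general p hp μ hμprob P Y hYmeas hindep hlaw
end
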